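/- Let 0 = c₀ < c₁ < ⋯ < c_n and let D₁, …, D_n ≥ 0. Then (∑_{i=1}^n (c_i − c_{i−1}) √(∑_{j=i}^n D_j))² ≥ ∑_{i=1}^n c_i² D_i. -/
import Mathlib


/-- Let `0 = c₀ < c₁ < ⋯ < c_n` and `D₁, …, D_n ≥ 0`. Then
`(∑_{i=1}^n (c_i − c_{i−1}) √(∑_{j=i}^n D_j))² ≥ ∑_{i=1}^n c_i² D_i`. -/
theorem key_combinatorial_inequality
    (n : ℕ) (c D : ℕ → ℝ) (hc0 : c 0 = 0)
    (hmono : ∀ i, i < n → c i < c (i + 1))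
    (hD : ∀ i, 0 ≤ D i) :
    ∑ i ∈ Finset.Icc 1 n, (c i) ^ 2 * D i ≤
      (∑ i ∈ Finset.Icc 1 n, (c i - c (i - 1)) * Real.sqrt (∑ j ∈ Finset.Icc i n, D j)) ^ 2 := by
  classical
  set b : ℕ → ℝ := fun i => c i - c (i - 1) with hb'
  set T : ℕ → ℝ := fun i => ∑ j ∈ Finset.Icc i n, D j with hT'
  have hbnn : ∀ i ∈ Finset.Icc 1 n, 0 ≤ b i := by
    intro i hi
    simp only [Finset.mem_Icc] at hi
    have h := hmono (i - 1) (by omega)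
    have hi1 : i - 1 + 1 = i := by omega
    rw [hi1] at h
    simp only [hb']
    linarith
  have hTnn : ∀ i, 0 ≤ T i := fun i => Finset.sum_nonneg fun j _ => hD j
  have hTmono : ∀ i k : ℕ, i ≤ k → T k ≤ T i := by
    intro i k h
    exact Finset.sum_le_sum_of_subset_of_nonneg
      (Finset.Icc_subset_Icc_left h) (fun j _ _ => hD j)
  have htel : ∀ j, ∑ i ∈ Finset.Icc 1 j, b i = c j := by
    intro j
    induction j with
    | zero => simp [hc0]
    | succ m ih =>
      rw [Finset.sum_Icc_succ_top (by omega), ih]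
      simp [hb']
  have hfilter : ∀ j ∈ Finset.Icc 1 n,
      (Finset.Icc 1 n).filter (fun i => i ≤ j) = Finset.Icc 1 j := by
    intro j hj
    simp only [Finset.mem_Icc] at hj
    ext i
    simp only [Finset.mem_filter, Finset.mem_Icc]
    omega
  -- Step 1: rewrite LHS as a triple sum
  have step1 : ∑ i ∈ Finset.Icc 1 n, c i ^ 2 * D i
      = ∑ j ∈ Finset.Icc 1 n, ∑ i ∈ Finset.Icc 1 n, ∑ k ∈ Finset.Icc 1 n,
          (if i ≤ j then b i else 0) * ((if k ≤ j then b k else 0) * D j) := by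
    apply Finset.sum_congr rfl
    intro j hj
    have h1 : ∑ i ∈ Finset.Icc 1 n, (if i ≤ j then b i else 0) = c j := by
      rw [← Finset.sum_filter, hfilter j hj, htel j]
    calc c j ^ 2 * D j
        = (∑ i ∈ Finset.Icc 1 n, (if i ≤ j then b i else 0)) *
          ((∑ k ∈ Finset.Icc 1 n, (if k ≤ j then b k else 0)) * D j) := by rw [h1]; ring
      _ = ∑ i ∈ Finset.Icc 1 n, (if i ≤ j then b i else 0) *
          ((∑ k ∈ Finset.Icc 1 n, (if k ≤ j then b k else 0)) * D j) := by
            rw [Finset.sum_mul]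
      _ = _ := by
            apply Finset.sum_congr rfl
            intro i _
            rw [Finset.sum_mul, Finset.mul_sum]
  -- Step 2: swap the sums
  have step2 : ∑ j ∈ Finset.Icc 1 n, ∑ i ∈ Finset.Icc 1 n, ∑ k ∈ Finset.Icc 1 n,
          (if i ≤ j then b i else 0) * ((if k ≤ j then b k else 0) * D j)
      = ∑ i ∈ Finset.Icc 1 n, ∑ k ∈ Finset.Icc 1 n, b i * b k * T (max i k) := by
    rw [Finset.sum_comm]
    apply Finset.sum_congr rfl
    intro i hi
    rw [Finset.sum_comm]
    apply Finset.sum_congr rfl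
    intro k hk
    simp only [Finset.mem_Icc] at hi hk
    have hterm : ∀ j : ℕ, (if i ≤ j then b i else 0) * ((if k ≤ j then b k else 0) * D j)
        = if max i k ≤ j then b i * (b k * D j) else 0 := by
      intro j
      by_cases h1 : i ≤ j <;> by_cases h2 : k ≤ j <;>
        simp [h1, h2, max_le_iff]
    simp only [hterm]
    rw [← Finset.sum_filter]
    have hf2 : (Finset.Icc 1 n).filter (fun j => max i k ≤ j) = Finset.Icc (max i k) n := by
      ext j
      simp only [Finset.mem_filter, Finset.mem_Icc, max_le_iff]
      omega
    rw [hf2]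
    simp only [hT', ← Finset.mul_sum]
    ring
  -- Step 3: bound each term
  have step3 : ∑ i ∈ Finset.Icc 1 n, ∑ k ∈ Finset.Icc 1 n, b i * b k * T (max i k)
      ≤ ∑ i ∈ Finset.Icc 1 n, ∑ k ∈ Finset.Icc 1 n,
          (b i * Real.sqrt (T i)) * (b k * Real.sqrt (T k)) := by
    apply Finset.sum_le_sum
    intro i hi
    apply Finset.sum_le_sum
    intro k hk
    have hbi := hbnn i hi
    have hbk := hbnn k hk
    have hTm : T (max i k) ≤ Real.sqrt (T i) * Real.sqrt (T k) := by
      rw [← Real.sqrt_mul (hTnn i)]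
      have : T (max i k) = Real.sqrt (T (max i k) * T (max i k)) := by
        rw [Real.sqrt_mul_self (hTnn _)]
      rw [this]
      apply Real.sqrt_le_sqrt
      have h1 : T (max i k) ≤ T i := hTmono _ _ (le_max_left _ _)
      have h2 : T (max i k) ≤ T k := hTmono _ _ (le_max_right _ _)
      exact mul_le_mul h1 h2 (hTnn _) (hTnn _)
    calc b i * b k * T (max i k) ≤ b i * b k * (Real.sqrt (T i) * Real.sqrt (T k)) := by
          apply mul_le_mul_of_nonneg_left hTm (mul_nonneg hbi hbk)
      _ = (b i * Real.sqrt (T i)) * (b k * Real.sqrt (T k)) := by ring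
  -- Step 4: the RHS is exactly the expanded square
  have step4 : ∑ i ∈ Finset.Icc 1 n, ∑ k ∈ Finset.Icc 1 n,
          (b i * Real.sqrt (T i)) * (b k * Real.sqrt (T k))
      = (∑ i ∈ Finset.Icc 1 n, b i * Real.sqrt (T i)) ^ 2 := by
    rw [sq, Finset.sum_mul_sum]
  calc ∑ i ∈ Finset.Icc 1 n, c i ^ 2 * D i
      = ∑ i ∈ Finset.Icc 1 n, ∑ k ∈ Finset.Icc 1 n, b i * b k * T (max i k) := by
        rw [step1, step2]
    _ ≤ _ := step3
    _ = _ := by rw [step4]
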